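/- arXiv:2209.12620 — 3 statements merged into one kernel-verified Lean document; each statement's English description precedes it below -/
import Mathlib

section
/- For each g ∈ SL_3(F), the map sending the octonion [[α,u],[v,β]] to [[α, ug],[v·(g⁻¹)ᵀ, β]] (with u, v regarded as row vectors) is an algebra automorphism of the split octonion algebra. -/
/-- Zorn vector matrices: the split octonion algebra over a commutative ring. -/
structure Oct (F : Type*) [CommRing F] where
  a1 : F
  u : Fin 3 → F
  v : Fin 3 → F
  a2 : F

namespace Oct

variable {F : Type*} [CommRing F]

/-- Dot product on F^3. -/
def dot (x y : Fin 3 → F) : F := x 0 * y 0 + x 1 * y 1 + x 2 * y 2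

/-- Cross product on F^3. -/
def cross (x y : Fin 3 → F) : Fin 3 → F :=
  ![x 1 * y 2 - x 2 * y 1, x 2 * y 0 - x 0 * y 2, x 0 * y 1 - x 1 * y 0]

/-- Zorn vector matrix multiplication. -/
instance : Mul (Oct F) :=
  ⟨fun a b =>
    ⟨a.a1 * b.a1 + dot a.u b.v,
     fun i => a.a1 * b.u i + b.a2 * a.u i - cross a.v b.v i,
     fun i => b.a1 * a.v i + a.a2 * b.v i + cross a.u b.u i,
     a.a2 * b.a2 + dot a.v b.u⟩⟩

instance : Add (Oct F) := ⟨fun a b => ⟨a.a1 + b.a1, a.u + b.u, a.v + b.v, a.a2 + b.a2⟩⟩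
instance : Neg (Oct F) := ⟨fun a => ⟨-a.a1, -a.u, -a.v, -a.a2⟩⟩
instance : Sub (Oct F) := ⟨fun a b => a + -b⟩
instance : Zero (Oct F) := ⟨⟨0, 0, 0, 0⟩⟩
instance : One (Oct F) := ⟨⟨1, 0, 0, 1⟩⟩
instance : SMul F (Oct F) := ⟨fun c a => ⟨c * a.a1, c • a.u, c • a.v, c * a.a2⟩⟩

/-- The trace of an octonion. -/
def tr (a : Oct F) : F := a.a1 + a.a2

/-- The norm of an octonion. -/
def norm (a : Oct F) : F := a.a1 * a.a2 - dot a.u a.v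

/-- The conjugate (standard involution) of an octonion. -/
def conj (a : Oct F) : Oct F := ⟨a.a2, -a.u, -a.v, a.a1⟩

def e₁ : Oct F := ⟨1, 0, 0, 0⟩
def e₂ : Oct F := ⟨0, 0, 0, 1⟩
/-- The basis octonion u_i. -/
def uB (i : Fin 3) : Oct F := ⟨0, fun j => if j = i then 1 else 0, 0, 0⟩
/-- The basis octonion v_i. -/
def vB (i : Fin 3) : Oct F := ⟨0, 0, fun j => if j = i then 1 else 0, 0⟩

end Oct
/-- The action of g ∈ SL₃ on octonions: u ↦ ug, v ↦ v(g⁻¹).transpose. -/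
noncomputable def sl3Map {F : Type*} [Field F] (g : Matrix (Fin 3) (Fin 3) F) (a : Oct F) : Oct F :=
  ⟨a.a1, Matrix.vecMul a.u g, Matrix.vecMul a.v (g⁻¹).transpose, a.a2⟩

open Matrix
section Aux

variable {F : Type*} [CommRing F]

theorem Oct.ext' {a b : Oct F} (h1 : a.a1 = b.a1) (h2 : a.u = b.u) (h3 : a.v = b.v)
    (h4 : a.a2 = b.a2) : a = b := by
  cases a; cases b; simp_all

theorem oct_mul_def (a b : Oct F) : a * b =
    ⟨a.a1 * b.a1 + Oct.dot a.u b.v,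
     fun i => a.a1 * b.u i + b.a2 * a.u i - Oct.cross a.v b.v i,
     fun i => b.a1 * a.v i + a.a2 * b.v i + Oct.cross a.u b.u i,
     a.a2 * b.a2 + Oct.dot a.v b.u⟩ := rfl

theorem crossA (x y : Fin 3 → F) (M : Matrix (Fin 3) (Fin 3) F) :
    Oct.cross (Matrix.vecMul x M) (Matrix.vecMul y M) =
      Matrix.vecMul (Oct.cross x y) (M.adjugate)ᵀ := by
  funext i
  fin_cases i <;>
    simp [Oct.cross, Matrix.vecMul, dotProduct, Fin.sum_univ_three,
      Matrix.adjugate_fin_three] <;> ring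

theorem dotB (x y : Fin 3 → F) (M : Matrix (Fin 3) (Fin 3) F) :
    Oct.dot (Matrix.vecMul x M) (Matrix.vecMul y (M.adjugate)ᵀ) = M.det * Oct.dot x y := by
  simp [Oct.dot, Matrix.vecMul, dotProduct, Fin.sum_univ_three,
    Matrix.adjugate_fin_three, Matrix.det_fin_three]
  ring

theorem dotB2 (x y : Fin 3 → F) (M : Matrix (Fin 3) (Fin 3) F) :
    Oct.dot (Matrix.vecMul x (M.adjugate)ᵀ) (Matrix.vecMul y M) = M.det * Oct.dot x y := by
  simp [Oct.dot, Matrix.vecMul, dotProduct, Fin.sum_univ_three,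
    Matrix.adjugate_fin_three, Matrix.det_fin_three]
  ring

theorem vecMul_lin (α β : F) (x y z : Fin 3 → F) (M : Matrix (Fin 3) (Fin 3) F) (i : Fin 3) :
    Matrix.vecMul (fun j => α * x j + β * y j - z j) M i =
      α * Matrix.vecMul x M i + β * Matrix.vecMul y M i - Matrix.vecMul z M i := by
  simp [Matrix.vecMul, dotProduct, Fin.sum_univ_three]
  ring

theorem vecMul_lin' (α β : F) (x y z : Fin 3 → F) (M : Matrix (Fin 3) (Fin 3) F) (i : Fin 3) :
    Matrix.vecMul (fun j => α * x j + β * y j + z j) M i =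
      α * Matrix.vecMul x M i + β * Matrix.vecMul y M i + Matrix.vecMul z M i := by
  simp [Matrix.vecMul, dotProduct, Fin.sum_univ_three]
  ring

end Aux

theorem sl3_automorphism {F : Type*} [Field F] (g : Matrix (Fin 3) (Fin 3) F)
    (hg : g.det = 1) :
    Function.Bijective (sl3Map g) ∧
    (∀ a b : Oct F, sl3Map g (a + b) = sl3Map g a + sl3Map g b) ∧
    (∀ (c : F) (a : Oct F), sl3Map g (c • a) = c • sl3Map g a) ∧
    (∀ a b : Oct F, sl3Map g (a * b) = sl3Map g a * sl3Map g b) ∧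
    sl3Map g (1 : Oct F) = 1 := by
  have hu : IsUnit g.det := by rw [hg]; exact isUnit_one
  have hadj : g⁻¹ = g.adjugate := by
    rw [Matrix.inv_def, hg, Ring.inverse_one, one_smul]
  have hgg : g * g⁻¹ = 1 := Matrix.mul_nonsing_inv g hu
  have hgg' : g⁻¹ * g = 1 := Matrix.nonsing_inv_mul g hu
  have hginv : (g⁻¹)⁻¹ = g := Matrix.nonsing_inv_nonsing_inv g hu
  have hcross_v : ∀ x y : Fin 3 → F,
      Oct.cross (Matrix.vecMul x (g⁻¹)ᵀ) (Matrix.vecMul y (g⁻¹)ᵀ) =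
        Matrix.vecMul (Oct.cross x y) g := by
    intro x y
    rw [hadj, crossA, ← Matrix.adjugate_transpose, Matrix.transpose_transpose,
      Matrix.adjugate_adjugate g (by simp : Fintype.card (Fin 3) ≠ 1), hg, one_pow, one_smul]
  have hcross_u : ∀ x y : Fin 3 → F,
      Oct.cross (Matrix.vecMul x g) (Matrix.vecMul y g) =
        Matrix.vecMul (Oct.cross x y) (g⁻¹)ᵀ := by
    intro x y
    rw [hadj, crossA]
  refine ⟨?_, ?_, ?_, ?_, ?_⟩
  · refine Function.bijective_iff_has_inverse.mpr ⟨sl3Map g⁻¹, fun a => ?_, fun a => ?_⟩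
    · refine Oct.ext' rfl ?_ ?_ rfl
      · show Matrix.vecMul (Matrix.vecMul a.u g) g⁻¹ = a.u
        rw [Matrix.vecMul_vecMul, hgg, Matrix.vecMul_one]
      · show Matrix.vecMul (Matrix.vecMul a.v (g⁻¹)ᵀ) ((g⁻¹)⁻¹)ᵀ = a.v
        rw [hginv, Matrix.vecMul_vecMul, ← Matrix.transpose_mul, hgg, Matrix.transpose_one,
          Matrix.vecMul_one]
    · refine Oct.ext' rfl ?_ ?_ rfl
      · show Matrix.vecMul (Matrix.vecMul a.u g⁻¹) g = a.u
        rw [Matrix.vecMul_vecMul, hgg', Matrix.vecMul_one]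
      · show Matrix.vecMul (Matrix.vecMul a.v ((g⁻¹)⁻¹)ᵀ) (g⁻¹)ᵀ = a.v
        rw [hginv, Matrix.vecMul_vecMul, ← Matrix.transpose_mul, hgg', Matrix.transpose_one,
          Matrix.vecMul_one]
  · intro a b
    refine Oct.ext' rfl ?_ ?_ rfl
    · show Matrix.vecMul (a.u + b.u) g = Matrix.vecMul a.u g + Matrix.vecMul b.u g
      rw [Matrix.add_vecMul]
    · show Matrix.vecMul (a.v + b.v) (g⁻¹)ᵀ =
        Matrix.vecMul a.v (g⁻¹)ᵀ + Matrix.vecMul b.v (g⁻¹)ᵀ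
      rw [Matrix.add_vecMul]
  · intro c a
    refine Oct.ext' rfl ?_ ?_ rfl
    · show Matrix.vecMul (c • a.u) g = c • Matrix.vecMul a.u g
      rw [Matrix.smul_vecMul]
    · show Matrix.vecMul (c • a.v) (g⁻¹)ᵀ = c • Matrix.vecMul a.v (g⁻¹)ᵀ
      rw [Matrix.smul_vecMul]
  · intro a b
    rw [oct_mul_def, oct_mul_def]
    refine Oct.ext' ?_ ?_ ?_ ?_
    · show a.a1 * b.a1 + Oct.dot a.u b.v =
        a.a1 * b.a1 + Oct.dot (Matrix.vecMul a.u g) (Matrix.vecMul b.v (g⁻¹)ᵀ)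
      rw [hadj, dotB, hg, one_mul]
    · show Matrix.vecMul (fun i => a.a1 * b.u i + b.a2 * a.u i - Oct.cross a.v b.v i) g = _
      funext i
      rw [vecMul_lin]
      show _ = a.a1 * Matrix.vecMul b.u g i + b.a2 * Matrix.vecMul a.u g i -
        Oct.cross (Matrix.vecMul a.v (g⁻¹)ᵀ) (Matrix.vecMul b.v (g⁻¹)ᵀ) i
      rw [hcross_v]
    · show Matrix.vecMul (fun i => b.a1 * a.v i + a.a2 * b.v i + Oct.cross a.u b.u i) (g⁻¹)ᵀ = _
      funext i
      rw [vecMul_lin']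
      show _ = b.a1 * Matrix.vecMul a.v (g⁻¹)ᵀ i + a.a2 * Matrix.vecMul b.v (g⁻¹)ᵀ i +
        Oct.cross (Matrix.vecMul a.u g) (Matrix.vecMul b.u g) i
      rw [hcross_u]
    · show a.a2 * b.a2 + Oct.dot a.v b.u =
        a.a2 * b.a2 + Oct.dot (Matrix.vecMul a.v (g⁻¹)ᵀ) (Matrix.vecMul b.u g)
      rw [hadj, dotB2, hg, one_mul]
  · refine Oct.ext' rfl ?_ ?_ rfl
    · show Matrix.vecMul (0 : Fin 3 → F) g = 0
      simp
    · show Matrix.vecMul (0 : Fin 3 → F) (g⁻¹)ᵀ = 0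
      simp
end

section
/- In the split octonion algebra over a field of characteristic 2, the subalgebra generated by the basis octonions u₁ = [[0,(1,0,0)],[0,0]], v₂ = [[0,0],[(0,1,0),0]], v₃ = [[0,0],[(0,0,1),0]] is the 3-dimensional F-span of {u₁, v₂, v₃}; in particular all pairwise products among u₁, v₂, v₃ lie in this span. -/
namespace Oct
variable {F : Type*} [CommRing F]

lemma ext'_s12 {a b : Oct F} (h1 : a.a1 = b.a1) (h2 : ∀ i, a.u i = b.u i)
    (h3 : ∀ i, a.v i = b.v i) (h4 : a.a2 = b.a2) : a = b := by
  cases a; cases b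
  simp only [Oct.mk.injEq]
  exact ⟨h1, funext h2, funext h3, h4⟩

@[simp] lemma mul_a1 (a b : Oct F) : (a * b).a1 = a.a1 * b.a1 + dot a.u b.v := rfl
@[simp] lemma mul_u (a b : Oct F) (i : Fin 3) :
    (a * b).u i = a.a1 * b.u i + b.a2 * a.u i - cross a.v b.v i := rfl
@[simp] lemma mul_v (a b : Oct F) (i : Fin 3) :
    (a * b).v i = b.a1 * a.v i + a.a2 * b.v i + cross a.u b.u i := rfl
@[simp] lemma mul_a2 (a b : Oct F) : (a * b).a2 = a.a2 * b.a2 + dot a.v b.u := rfl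
@[simp] lemma add_a1 (a b : Oct F) : (a + b).a1 = a.a1 + b.a1 := rfl
@[simp] lemma add_u (a b : Oct F) (i : Fin 3) : (a + b).u i = a.u i + b.u i := rfl
@[simp] lemma add_v (a b : Oct F) (i : Fin 3) : (a + b).v i = a.v i + b.v i := rfl
@[simp] lemma add_a2 (a b : Oct F) : (a + b).a2 = a.a2 + b.a2 := rfl
@[simp] lemma smul_a1 (c : F) (a : Oct F) : (c • a).a1 = c * a.a1 := rfl
@[simp] lemma smul_u (c : F) (a : Oct F) (i : Fin 3) : (c • a).u i = c * a.u i := rfl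
@[simp] lemma smul_v (c : F) (a : Oct F) (i : Fin 3) : (c • a).v i = c * a.v i := rfl
@[simp] lemma smul_a2 (c : F) (a : Oct F) : (c • a).a2 = c * a.a2 := rfl
@[simp] lemma zero_a1 : (0 : Oct F).a1 = 0 := rfl
@[simp] lemma zero_u (i : Fin 3) : (0 : Oct F).u i = 0 := rfl
@[simp] lemma zero_v (i : Fin 3) : (0 : Oct F).v i = 0 := rfl
@[simp] lemma zero_a2 : (0 : Oct F).a2 = 0 := rfl
@[simp] lemma uB_a1 (i : Fin 3) : (uB i : Oct F).a1 = 0 := rfl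
@[simp] lemma uB_u (i j : Fin 3) : (uB i : Oct F).u j = if j = i then 1 else 0 := rfl
@[simp] lemma uB_v (i j : Fin 3) : (uB i : Oct F).v j = 0 := rfl
@[simp] lemma uB_a2 (i : Fin 3) : (uB i : Oct F).a2 = 0 := rfl
@[simp] lemma vB_a1 (i : Fin 3) : (vB i : Oct F).a1 = 0 := rfl
@[simp] lemma vB_u (i j : Fin 3) : (vB i : Oct F).u j = 0 := rfl
@[simp] lemma vB_v (i j : Fin 3) : (vB i : Oct F).v j = if j = i then 1 else 0 := rfl
@[simp] lemma vB_a2 (i : Fin 3) : (vB i : Oct F).a2 = 0 := rfl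
lemma ext3 {a b : Oct F} (h1 : a.a1 = b.a1)
    (h20 : a.u 0 = b.u 0) (h21 : a.u 1 = b.u 1) (h22 : a.u 2 = b.u 2)
    (h30 : a.v 0 = b.v 0) (h31 : a.v 1 = b.v 1) (h32 : a.v 2 = b.v 2)
    (h4 : a.a2 = b.a2) : a = b := by
  apply ext'_s12 h1 ?_ ?_ h4 <;> intro i <;> fin_cases i <;> assumption
end Oct

theorem span_u1_v2_v3_subalgebra {F : Type*} [Field F] [CharP F 2] :
    (∀ x ∈ ({Oct.uB 0, Oct.vB 1, Oct.vB 2} : Set (Oct F)),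
      ∀ y ∈ ({Oct.uB 0, Oct.vB 1, Oct.vB 2} : Set (Oct F)),
        ∃ c₁ c₂ c₃ : F, x * y = c₁ • Oct.uB 0 + c₂ • Oct.vB 1 + c₃ • Oct.vB 2) ∧
    (∀ c₁ c₂ c₃ : F,
      c₁ • (Oct.uB 0 : Oct F) + c₂ • Oct.vB 1 + c₃ • Oct.vB 2 = 0 →
        c₁ = 0 ∧ c₂ = 0 ∧ c₃ = 0) := by
  constructor
  · intro x hx y hy
    simp only [Set.mem_insert_iff, Set.mem_singleton_iff] at hx hy
    rcases hx with rfl | rfl | rfl <;> rcases hy with rfl | rfl | rfl <;>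
      [refine ⟨0,0,0,?_⟩; refine ⟨0,0,0,?_⟩; refine ⟨0,0,0,?_⟩; refine ⟨0,0,0,?_⟩;
       refine ⟨0,0,0,?_⟩; refine ⟨-1,0,0,?_⟩; refine ⟨0,0,0,?_⟩; refine ⟨1,0,0,?_⟩;
       refine ⟨0,0,0,?_⟩] <;>
      (apply Oct.ext3 <;> simp [Oct.dot, Oct.cross, Fin.ext_iff])
  · intro c₁ c₂ c₃ h
    refine ⟨?_, ?_, ?_⟩
    · have := congrArg (fun z : Oct F => z.u 0) h; simpa using this
    · have := congrArg (fun z : Oct F => z.v 1) h; simpa using this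
    · have := congrArg (fun z : Oct F => z.v 2) h; simpa using this
end

section
/- In the split octonion algebra, let a₁ = u₁, a₂ = v₁, a₃ = e₁ + u₂ - v₂ - e₂, a₄ = u₂ and b₄ = -v₂ (with e₁ = [[1,0],[0,0]], e₂ = [[0,0],[0,1]]). Then tr(a_i·a₄) = tr(a_i·b₄) for i = 1,2,3, tr((a_i a_j)a₄) = tr((a_i a_j)b₄) for 1 ≤ i < j ≤ 3, but tr(((a₁a₂)a₃)a₄) = 0 while tr(((a₁a₂)a₃)b₄) = -1. -/
section
variable {F : Type*} [CommRing F] (a b : Oct F) (i : Fin 3)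
lemma mul_a1 : (a * b).a1 = a.a1 * b.a1 + Oct.dot a.u b.v := rfl
lemma mul_a2 : (a * b).a2 = a.a2 * b.a2 + Oct.dot a.v b.u := rfl
lemma mul_u : (a * b).u i = a.a1 * b.u i + b.a2 * a.u i - Oct.cross a.v b.v i := rfl
lemma mul_v : (a * b).v i = b.a1 * a.v i + a.a2 * b.v i + Oct.cross a.u b.u i := rfl
lemma add_a1 : (a + b).a1 = a.a1 + b.a1 := rfl
lemma add_a2 : (a + b).a2 = a.a2 + b.a2 := rfl
lemma add_u : (a + b).u i = a.u i + b.u i := rfl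
lemma add_v : (a + b).v i = a.v i + b.v i := rfl
lemma neg_a1 : (-a).a1 = -a.a1 := rfl
lemma neg_a2 : (-a).a2 = -a.a2 := rfl
lemma neg_u : (-a).u i = -a.u i := rfl
lemma neg_v : (-a).v i = -a.v i := rfl
lemma sub_a1 : (a - b).a1 = a.a1 - b.a1 := sub_eq_add_neg a.a1 b.a1 ▸ rfl
lemma sub_a2 : (a - b).a2 = a.a2 - b.a2 := sub_eq_add_neg a.a2 b.a2 ▸ rfl
lemma sub_u : (a - b).u i = a.u i - b.u i := sub_eq_add_neg (a.u i) (b.u i) ▸ rfl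
lemma sub_v : (a - b).v i = a.v i - b.v i := sub_eq_add_neg (a.v i) (b.v i) ▸ rfl
end

theorem separating_example_four {F : Type*} [Field F] (h2 : (2 : F) ≠ 0)
    (a₁ a₂ a₃ a₄ b₄ : Oct F)
    (ha₁ : a₁ = Oct.uB 0) (ha₂ : a₂ = Oct.vB 0)
    (ha₃ : a₃ = Oct.e₁ + Oct.uB 1 - Oct.vB 1 - Oct.e₂)
    (ha₄ : a₄ = Oct.uB 1) (hb₄ : b₄ = -Oct.vB 1) :
    Oct.tr (a₁ * a₄) = Oct.tr (a₁ * b₄) ∧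
    Oct.tr (a₂ * a₄) = Oct.tr (a₂ * b₄) ∧
    Oct.tr (a₃ * a₄) = Oct.tr (a₃ * b₄) ∧
    Oct.tr ((a₁ * a₂) * a₄) = Oct.tr ((a₁ * a₂) * b₄) ∧
    Oct.tr ((a₁ * a₃) * a₄) = Oct.tr ((a₁ * a₃) * b₄) ∧
    Oct.tr ((a₂ * a₃) * a₄) = Oct.tr ((a₂ * a₃) * b₄) ∧
    Oct.tr (((a₁ * a₂) * a₃) * a₄) = 0 ∧
    Oct.tr (((a₁ * a₂) * a₃) * b₄) = -1 := by
  subst ha₁ ha₂ ha₃ ha₄ hb₄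
  refine ⟨?_, ?_, ?_, ?_, ?_, ?_, ?_, ?_⟩ <;>
  · simp only [Oct.tr, mul_a1, mul_a2, mul_u, mul_v, add_a1, add_a2, add_u, add_v,
      sub_a1, sub_a2, sub_u, sub_v, neg_a1, neg_a2, neg_u, neg_v,
      Oct.uB, Oct.vB, Oct.e₁, Oct.e₂, Oct.dot, Oct.cross]
    norm_num [Matrix.cons_val_zero, Matrix.cons_val_one, Matrix.head_cons,
      Matrix.cons_val_two, Matrix.tail_cons, Fin.ext_iff, Pi.add_apply, Pi.neg_apply,
      Pi.zero_apply]
end
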